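/- Let K be a field, N ≥ 3 an ODD integer, and α, β ∈ K. Suppose τ : ℤ → K satisfies τ_n ≠ 0 for all n, and u_n := τ_{n+3}τ_n/(τ_{n+2}τ_{n+1}) satisfies the generalized DTKQ equation of order N with parameters α, β for all n ∈ ℤ. Then the quantity K̄_n := (τ_n·τ_{n+2N+2} − α²·τ_{n+2}·τ_{n+2N})/(τ_{n+N+1})² is independent of n; equivalently, τ satisfies the bilinear equation τ_{n+2N+2}τ_n = α²·τ_{n+2N}τ_{n+2} + K̄·(τ_{n+N+1})² for all n, with the constant K̄ := K̄_0. -/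

import Mathlib

/-!
The product in the DTKQ equation telescopes, so the equation reads
`(S_n + β) τ_{n+1} τ_{n+N+2} = α τ_{n+3} τ_{n+N}`, where `S_n = ∑_{j=0}^{N} u_{n+j}`.
Since `S_{n+1} - S_n = u_{n+N+1} - u_n`, comparing this at `n` and `n + 1` shows that the
coefficient `F_n` of the first bilinear equation
`τ_n τ_{n+N+2} = α τ_{n+2} τ_{n+N} + F_n τ_{n+1} τ_{n+N+1}` is 2-periodic.
For odd `N` this gives `F_{n+N} = F_{n+1}`, and eliminating the middle terms between the first
bilinear equation at `n` and at `n + N` expresses `K̄_n` through `F_n`, `F_{n+1}`; this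
expression is visibly invariant under `n ↦ n + 1`.
-/

open Finset

theorem Function.Periodic.add_odd_eq_add_one {M : Type*} {F : ℤ → M} {N : ℕ}
    (hF : Function.Periodic F 2) (hNodd : Odd N)
    (m : ℤ) : F (m + N) = F (m + 1) := by
  obtain ⟨k, rfl⟩ := hNodd
  rw [show m + ↑(2 * k + 1) = m + 1 + ↑k * 2 by push_cast; ring, hF.nat_mul k]

theorem Finset.sum_range_shift_one {M : Type*} [AddCommGroup M] (f : ℤ → M) (n : ℤ) (m : ℕ) :
    ∑ j ∈ range m, f (n + 1 + j) = ∑ j ∈ range m, f (n + j) + f (n + m) - f n := by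
  have h := (sum_range_succ (fun j : ℕ => f (n + j)) m).symm.trans
    (sum_range_succ' (fun j : ℕ => f (n + j)) m)
  simp only [Nat.cast_add, Nat.cast_one, Nat.cast_zero, add_zero, ← add_assoc,
    add_right_comm n _ (1 : ℤ)] at h
  rw [h]
  abel

namespace DTKQ

variable {K : Type*} [Field K]

theorem prod_range_tau_ratio {τ u : ℤ → K} (hτ : ∀ n, τ n ≠ 0)
    (hu : ∀ n : ℤ, u n = τ (n + 3) * τ n / (τ (n + 2) * τ (n + 1))) (n : ℤ) (m : ℕ) :
    ∏ k ∈ range m, u (n + k + 1) = τ (n + m + 3) * τ (n + 1) / (τ (n + 3) * τ (n + m + 1)) := by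
  induction m with
  | zero => simp [div_self (mul_ne_zero (hτ (n + 3)) (hτ (n + 1)))]
  | succ m ih =>
    rw [prod_range_succ, ih, hu, Nat.cast_succ, ← add_assoc n,
      show n + m + 1 + 3 = n + m + 4 by ring, show n + m + 1 + 2 = n + m + 3 by ring,
      show n + m + 1 + 1 = n + m + 2 by ring]
    field_simp [hτ]

theorem sum_add_mul_tau_eq {N : ℕ} (hN : 1 ≤ N) {α β : K} {τ u : ℤ → K} (hτ : ∀ n, τ n ≠ 0)
    (hu : ∀ n : ℤ, u n = τ (n + 3) * τ n / (τ (n + 2) * τ (n + 1))) (n : ℤ)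
    (hDTKQ : ((∑ j ∈ range (N + 1), u (n + j)) + β) *
      (∏ k ∈ range (N - 1), u (n + k + 1)) = α) :
    ((∑ j ∈ range (N + 1), u (n + j)) + β) * (τ (n + N + 2) * τ (n + 1)) =
      α * (τ (n + 3) * τ (n + N)) := by
  rw [prod_range_tau_ratio hτ hu, Nat.cast_sub hN, Nat.cast_one,
    show n + ((N : ℤ) - 1) + 3 = n + N + 2 by ring,
    show n + ((N : ℤ) - 1) + 1 = n + N by ring] at hDTKQ
  field_simp [hτ] at hDTKQ
  linear_combination hDTKQ

/-- The coefficient `F_m` of the first bilinear equation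
`τ_m τ_{m+N+2} = α τ_{m+2} τ_{m+N} + F_m τ_{m+1} τ_{m+N+1}`. -/
def firstBilinearCoeff (α : K) (N : ℕ) (τ : ℤ → K) (m : ℤ) : K :=
  (τ m * τ (m + N + 2) - α * (τ (m + 2) * τ (m + N))) / (τ (m + 1) * τ (m + N + 1))

theorem first_bilinear {α : K} {N : ℕ} {τ : ℤ → K} (hτ : ∀ n, τ n ≠ 0) (m : ℤ) :
    τ m * τ (m + N + 2) = α * (τ (m + 2) * τ (m + N)) +
      firstBilinearCoeff α N τ m * (τ (m + 1) * τ (m + N + 1)) := by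
  rw [firstBilinearCoeff, div_mul_cancel₀ _ (mul_ne_zero (hτ _) (hτ _))]
  ring

theorem firstBilinearCoeff_periodic {N : ℕ} {α β : K} {τ u : ℤ → K} (hτ : ∀ n, τ n ≠ 0)
    (hu : ∀ n : ℤ, u n = τ (n + 3) * τ n / (τ (n + 2) * τ (n + 1)))
    (hE : ∀ n : ℤ, ((∑ j ∈ range (N + 1), u (n + j)) + β) * (τ (n + N + 2) * τ (n + 1)) =
      α * (τ (n + 3) * τ (n + N))) :
    Function.Periodic (firstBilinearCoeff α N τ) 2 := by
  intro n
  have e₀ := hE n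
  have e₁ := hE (n + 1)
  rw [sum_range_shift_one, Nat.cast_succ, ← add_assoc, hu n, hu (n + N + 1)] at e₁
  field_simp [hτ] at e₁
  -- eliminating `S_n` between `e₀` and `e₁` leaves `F (n + 2) = F n`, cross-multiplied
  have hcross : ((τ (n+2) * τ (n+N+4) - α * (τ (n+4) * τ (n+N+2))) * (τ (n+1) * τ (n+N+1)) -
      (τ n * τ (n+N+2) - α * (τ (n+2) * τ (n+N))) * (τ (n+3) * τ (n+N+3)))
        * (τ (n+N+3) * τ (n+2)) = 0 := by
    linear_combination (norm := ring_nf) e₁ - (τ (n+N+3) ^ 2 * τ (n+2) ^ 2) * e₀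
  have hcross' := (mul_eq_zero.mp hcross).resolve_right (mul_ne_zero (hτ _) (hτ _))
  rw [firstBilinearCoeff, firstBilinearCoeff,
    div_eq_div_iff (mul_ne_zero (hτ _) (hτ _)) (mul_ne_zero (hτ _) (hτ _))]
  linear_combination (norm := ring_nf) hcross'

section SecondBilinear

variable {α : K} {N : ℕ} {τ F : ℤ → K}

/-- The quotient `K̄_n` of the second bilinear equation. -/
def secondBilinearQuotient (α : K) (N : ℕ) (τ : ℤ → K) (n : ℤ) : K :=
  (τ n * τ (n + 2 * N + 2) - α ^ 2 * (τ (n + 2) * τ (n + 2 * N))) / (τ (n + N + 1)) ^ 2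

theorem first_bilinear_add_odd (hNodd : Odd N) (hF : Function.Periodic F 2)
    (hfirst : ∀ m, τ m * τ (m + N + 2) = α * (τ (m + 2) * τ (m + N)) +
      F m * (τ (m + 1) * τ (m + N + 1))) (n : ℤ) :
    τ (n + N) * τ (n + 2 * N + 2) = α * (τ (n + N + 2) * τ (n + 2 * N)) +
      F (n + 1) * (τ (n + N + 1) * τ (n + 2 * N + 1)) := by
  have h := hfirst (n + N)
  rw [hF.add_odd_eq_add_one hNodd] at h
  linear_combination (norm := ring_nf) h

theorem secondBilinearQuotient_eq (hτ : ∀ n, τ n ≠ 0) (hNodd : Odd N)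
    (hF : Function.Periodic F 2)
    (hfirst : ∀ m, τ m * τ (m + N + 2) = α * (τ (m + 2) * τ (m + N)) +
      F m * (τ (m + 1) * τ (m + N + 1))) (n : ℤ) :
    secondBilinearQuotient α N τ n =
      (α * F n * (τ (n + 1) * τ (n + 2 * N)) + F (n + 1) * (τ n * τ (n + 2 * N + 1))) /
        (τ (n + N) * τ (n + N + 1)) := by
  rw [secondBilinearQuotient,
    div_eq_div_iff (pow_ne_zero 2 (hτ _)) (mul_ne_zero (hτ _) (hτ _))]
  linear_combination (norm := ring_nf)
    (τ n * τ (n + N + 1)) * first_bilinear_add_odd hNodd hF hfirst n +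
      (α * τ (n + 2 * N) * τ (n + N + 1)) * hfirst n

theorem secondBilinearQuotient_periodic (hτ : ∀ n, τ n ≠ 0) (hNodd : Odd N)
    (hF : Function.Periodic F 2)
    (hfirst : ∀ m, τ m * τ (m + N + 2) = α * (τ (m + 2) * τ (m + N)) +
      F m * (τ (m + 1) * τ (m + N + 1))) :
    Function.Periodic (secondBilinearQuotient α N τ) 1 := by
  intro n
  rw [secondBilinearQuotient_eq hτ hNodd hF hfirst, secondBilinearQuotient_eq hτ hNodd hF hfirst,
    add_assoc n 1 1, one_add_one_eq_two, hF n,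
    div_eq_div_iff (mul_ne_zero (hτ _) (hτ _)) (mul_ne_zero (hτ _) (hτ _))]
  linear_combination (norm := ring_nf)
    (-(F (n + 1)) * τ (n + 2 * N + 1) * τ (n + N + 1)) * hfirst n +
      (F n * τ (n + 1) * τ (n + N + 1)) * first_bilinear_add_odd hNodd hF hfirst n

end SecondBilinear

end DTKQ

open DTKQ in
theorem dtkq_odd_second_bilinear_general {K : Type*} [Field K] (N : ℕ)
    (hNodd : Odd N) (α β : K)
    (τ : ℤ → K) (hτ : ∀ n, τ n ≠ 0)
    (u : ℤ → K) (hu : ∀ n : ℤ, u n = τ (n + 3) * τ n / (τ (n + 2) * τ (n + 1)))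
    (hDTKQ : ∀ n : ℤ,
      ((∑ j ∈ Finset.range (N + 1), u (n + j)) + β) *
        (∏ k ∈ Finset.range (N - 1), u (n + k + 1)) = α)
    (Kbar : ℤ → K)
    (hKbar : ∀ n : ℤ, Kbar n =
      (τ n * τ (n + 2 * N + 2) - α ^ 2 * (τ (n + 2) * τ (n + 2 * N))) /
        (τ (n + N + 1)) ^ 2) :
    (∀ n : ℤ, Kbar n = Kbar 0) ∧
      (∀ n : ℤ, τ (n + 2 * N + 2) * τ n =
        α ^ 2 * (τ (n + 2 * N) * τ (n + 2)) + Kbar 0 * (τ (n + N + 1)) ^ 2) := by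
  have hE n := sum_add_mul_tau_eq hNodd.pos hτ hu n (hDTKQ n)
  have hF := firstBilinearCoeff_periodic hτ hu hE
  have hK := secondBilinearQuotient_periodic hτ hNodd hF (first_bilinear hτ)
  have hconst (n : ℤ) : Kbar n = Kbar 0 := by
    simpa [hKbar, secondBilinearQuotient] using hK.int_mul_eq n
  refine ⟨hconst, fun n => ?_⟩
  rw [← hconst n, hKbar n, div_mul_cancel₀ _ (pow_ne_zero 2 (hτ _))]
  ring

/-- for odd `N`, the tau function of a solution of the generalized DTKQ
equation satisfies the bilinear equation
`τ_{n+2N+2} τ_n = α² τ_{n+2N} τ_{n+2} + K̄ (τ_{n+N+1})²` with constant `K̄`. -/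
theorem dtkq_odd_second_bilinear {K : Type*} [Field K] (N : ℕ) (hN : 3 ≤ N)
    (hNodd : Odd N) (α β : K)
    (τ : ℤ → K) (hτ : ∀ n, τ n ≠ 0)
    (u : ℤ → K) (hu : ∀ n : ℤ, u n = τ (n + 3) * τ n / (τ (n + 2) * τ (n + 1)))
    (hDTKQ : ∀ n : ℤ,
      ((∑ j ∈ Finset.range (N + 1), u (n + j)) + β) *
        (∏ k ∈ Finset.range (N - 1), u (n + k + 1)) = α)
    (Kbar : ℤ → K)
    (hKbar : ∀ n : ℤ, Kbar n =
      (τ n * τ (n + 2 * N + 2) - α ^ 2 * (τ (n + 2) * τ (n + 2 * N))) /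
        (τ (n + N + 1)) ^ 2) :
    (∀ n : ℤ, Kbar n = Kbar 0) ∧
      (∀ n : ℤ, τ (n + 2 * N + 2) * τ n =
        α ^ 2 * (τ (n + 2 * N) * τ (n + 2)) + Kbar 0 * (τ (n + N + 1)) ^ 2) :=
  dtkq_odd_second_bilinear_general N hNodd α β τ hτ u hu hDTKQ Kbar hKbar
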